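/- arXiv:1010.6127 — 5 statements merged into one kernel-verified Lean document; each statement's English description precedes it below -/
import Mathlib

section
/- Let W and W' be real Hilbert spaces and let T be a closed, densely defined linear operator with domain V ⊆ W and values in W', whose range T(V) is a closed subspace of W'. Then there exists a constant c_P > 0 such that every v ∈ V satisfying ⟨v, z⟩ = 0 for all z ∈ V with T z = 0 obeys the graph-norm Poincaré inequality (‖v‖² + ‖T v‖²)^{1/2} ≤ c_P ‖T v‖. (Poincaré inequality for the domain complex of a closed Hilbert complex.) -/
open scoped RealInnerProductSpace

/-!
The graph of `T` is a closed subspace of the Banach space `W × W'`, and projecting it onto the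
closed range of `T` is a continuous linear surjection between Banach spaces. The open mapping
theorem therefore gives every `T v` a preimage `u` with `T u = T v` and `‖u‖ ≤ C ‖T v‖`. If `v` is
orthogonal to `ker T ∋ v - u`, then `‖v‖² = ⟪v, u⟫ ≤ ‖v‖ ‖u‖`, so `‖v‖ ≤ C ‖T v‖`.
-/

namespace LinearPMap

variable {𝕜 E F : Type*} [NontriviallyNormedField 𝕜]
  [NormedAddCommGroup E] [NormedSpace 𝕜 E] [CompleteSpace E]
  [NormedAddCommGroup F] [NormedSpace 𝕜 F] [CompleteSpace F]

theorem IsClosed.exists_norm_le_of_isClosed_range {f : E →ₗ.[𝕜] F} (hf : f.IsClosed)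
    (hrange : _root_.IsClosed (Set.range f)) :
    ∃ C > 0, ∀ x : f.domain, ∃ y : f.domain, f y = f x ∧ ‖(y : E)‖ ≤ C * ‖f x‖ := by
  have : CompleteSpace f.graph := hf.completeSpace_coe
  have : CompleteSpace (LinearMap.range f.toFun) := hrange.completeSpace_coe
  let S : f.graph →L[𝕜] LinearMap.range f.toFun :=
    ((ContinuousLinearMap.snd 𝕜 E F).comp (f.graph.subtypeL)).codRestrict _ fun p => by
      obtain ⟨y, -, hy⟩ := (mem_graph_iff f).mp p.2
      exact ⟨y, hy⟩
  have hS : Function.Surjective S := by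
    rintro ⟨_, y, rfl⟩
    exact ⟨⟨((y : E), f y), (mem_graph_iff' f).mpr ⟨y, rfl⟩⟩, rfl⟩
  obtain ⟨C, hC, hpre⟩ := S.exists_preimage_norm_le hS
  refine ⟨C, hC, fun x => ?_⟩
  obtain ⟨p, hpx, hp⟩ := hpre ⟨f x, x, rfl⟩
  obtain ⟨y, hy₁, hy₂⟩ := (mem_graph_iff f).mp p.2
  refine ⟨y, hy₂.trans (congrArg Subtype.val hpx), ?_⟩
  calc ‖(y : E)‖ ≤ ‖p‖ := hy₁ ▸ norm_fst_le (p : E × F)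
    _ ≤ C * ‖f x‖ := hp

end LinearPMap

theorem norm_le_norm_of_inner_sub_eq_zero {E : Type*} [NormedAddCommGroup E]
    [InnerProductSpace ℝ E] {v u : E} (h : ⟪v, v - u⟫ = 0) : ‖v‖ ≤ ‖u‖ := by
  have hvu : ‖v‖ * ‖v‖ ≤ ‖v‖ * ‖u‖ :=
    calc ‖v‖ * ‖v‖ = ⟪v, u⟫ := by
          rw [← real_inner_self_eq_norm_mul_norm, ← sub_eq_zero, ← inner_sub_right, h]
      _ ≤ ‖v‖ * ‖u‖ := real_inner_le_norm v u
  rcases (norm_nonneg v).eq_or_lt with hv | hv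
  · exact hv ▸ norm_nonneg u
  · exact le_of_mul_le_mul_left hvu hv

theorem Real.sqrt_sq_add_sq_le_of_le_mul {a b C : ℝ} (ha : 0 ≤ a) (hb : 0 ≤ b)
    (h : a ≤ C * b) : √(a ^ 2 + b ^ 2) ≤ √(C ^ 2 + 1) * b := by
  rw [Real.sqrt_le_iff]
  refine ⟨by positivity, ?_⟩
  rw [mul_pow, Real.sq_sqrt (by positivity)]
  nlinarith [pow_le_pow_left₀ ha h 2]

theorem domain_complex_poincare_inequality_general
    {W W' : Type*}
    [NormedAddCommGroup W] [InnerProductSpace ℝ W] [CompleteSpace W]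
    [NormedAddCommGroup W'] [InnerProductSpace ℝ W'] [CompleteSpace W']
    (V : Submodule ℝ W)
    (T : V →ₗ[ℝ] W')
    (hgraph : IsClosed {p : W × W' | ∃ v : V, (v : W) = p.1 ∧ T v = p.2})
    (hrange : IsClosed (Set.range (⇑T))) :
    ∃ cP : ℝ, 0 < cP ∧
      ∀ v : V, (∀ z : V, T z = 0 → ⟪(v : W), (z : W)⟫ = 0) →
        Real.sqrt (‖(v : W)‖ ^ 2 + ‖T v‖ ^ 2) ≤ cP * ‖T v‖ := by
  have hclosed : (LinearPMap.mk V T).IsClosed := by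
    rwa [LinearPMap.IsClosed, show ((LinearPMap.mk V T).graph : Set (W × W')) = _ from
      Set.ext fun _ => LinearPMap.mem_graph_iff _]
  obtain ⟨C, -, hpre⟩ := hclosed.exists_norm_le_of_isClosed_range hrange
  refine ⟨√(C ^ 2 + 1), by positivity, fun v hv => ?_⟩
  obtain ⟨u, hu, hle⟩ := hpre v
  have hvu : ‖(v : W)‖ ≤ ‖(u : W)‖ :=
    norm_le_norm_of_inner_sub_eq_zero (hv (v - u) (by rw [map_sub, sub_eq_zero]; exact hu.symm))
  exact Real.sqrt_sq_add_sq_le_of_le_mul (norm_nonneg _) (norm_nonneg _) (hvu.trans hle)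

/-- **Poincaré inequality for the domain complex of a closed Hilbert complex**:
if `T` is a closed, densely defined linear operator with domain `V ⊆ W` and
closed range in `W'`, then there is a constant `c_P > 0` such that every `v ∈ V`
orthogonal (in `W`) to the kernel of `T` satisfies the graph-norm inequality
`(‖v‖² + ‖T v‖²)^{1/2} ≤ c_P ‖T v‖`. -/
theorem domain_complex_poincare_inequality
    {W W' : Type*}
    [NormedAddCommGroup W] [InnerProductSpace ℝ W] [CompleteSpace W]
    [NormedAddCommGroup W'] [InnerProductSpace ℝ W'] [CompleteSpace W']
    (V : Submodule ℝ W) (hVdense : Dense (V : Set W))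
    (T : V →ₗ[ℝ] W')
    (hgraph : IsClosed {p : W × W' | ∃ v : V, (v : W) = p.1 ∧ T v = p.2})
    (hrange : IsClosed (Set.range (⇑T))) :
    ∃ cP : ℝ, 0 < cP ∧
      ∀ v : V, (∀ z : V, T z = 0 → ⟪(v : W), (z : W)⟫ = 0) →
        Real.sqrt (‖(v : W)‖ ^ 2 + ‖T v‖ ^ 2) ≤ cP * ‖T v‖ :=
  domain_complex_poincare_inequality_general V T hgraph hrange
end

section
/- Let W0, W1, W2 be real Hilbert spaces, and let d0 and d1 be closed, densely defined linear operators, d0 with dense domain V0 ⊆ W0 and values in W1, d1 with dense domain V1 ⊆ W1 and values in W2, such that d0(V0) ⊆ V1 and d1(d0 τ) = 0 for all τ ∈ V0. If in addition the range B = d0(V0) is a closed subspace of W1, then W1 decomposes as the internal orthogonal direct sum W1 = B ⊕ H ⊕ Z^⊥, where Z = {w ∈ V1 : d1 w = 0} and H = Z ∩ B^⊥ is the harmonic space. (Strong Hodge decomposition for a closed Hilbert complex.) -/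
/-!
Since `d1 ∘ d0 = 0`, the range `B` lies in the kernel `Z`, and `Z` is closed because `d1` has a
closed graph. With both `B` and `Z` closed in the Hilbert space `W1`, the orthogonal projection
onto `B` splits `Z = B ⊕ (Z ⊓ Bᗮ)`, and the projection onto `Z` splits `W1 = Z ⊕ Zᗮ`.
-/

open scoped RealInnerProductSpace

theorem isClosed_map_ker_of_isClosed_graph {R E F : Type*} [Semiring R]
    [AddCommMonoid E] [Module R E] [TopologicalSpace E]
    [AddCommMonoid F] [Module R F] [TopologicalSpace F]
    {V : Submodule R E} {d : V →ₗ[R] F}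
    (hgraph : IsClosed {p : E × F | ∃ v : V, (v : E) = p.1 ∧ d v = p.2}) :
    IsClosed ((LinearMap.ker d).map V.subtype : Set E) := by
  have hker : ((LinearMap.ker d).map V.subtype : Set E) =
      (fun w => (w, (0 : F))) ⁻¹' {p : E × F | ∃ v : V, (v : E) = p.1 ∧ d v = p.2} := by
    ext w
    constructor
    · rintro ⟨v, hv, rfl⟩
      exact ⟨v, rfl, hv⟩
    · rintro ⟨v, rfl, hv⟩
      exact ⟨v, hv, rfl⟩
  rw [hker]
  exact hgraph.preimage (continuous_id.prodMk continuous_const)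

theorem range_le_map_ker_of_comp_eq_zero {R E₀ E₁ E₂ : Type*} [Semiring R]
    [AddCommMonoid E₀] [Module R E₀] [AddCommMonoid E₁] [Module R E₁]
    [AddCommMonoid E₂] [Module R E₂]
    {V₀ : Submodule R E₀} {V₁ : Submodule R E₁} {d₀ : V₀ →ₗ[R] E₁} {d₁ : V₁ →ₗ[R] E₂}
    (hsub : ∀ τ : V₀, d₀ τ ∈ V₁) (hdd : ∀ τ : V₀, d₁ ⟨d₀ τ, hsub τ⟩ = 0) :
    LinearMap.range d₀ ≤ (LinearMap.ker d₁).map V₁.subtype := by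
  rintro _ ⟨τ, rfl⟩
  exact ⟨⟨d₀ τ, hsub τ⟩, hdd τ, rfl⟩

namespace Submodule

variable {𝕜 E : Type*} [RCLike 𝕜] [NormedAddCommGroup E] [InnerProductSpace 𝕜 E]

theorem sup_inf_orthogonal_sup_orthogonal_eq_top {B Z : Submodule 𝕜 E} (hBZ : B ≤ Z)
    [B.HasOrthogonalProjection] [Z.HasOrthogonalProjection] :
    B ⊔ (Z ⊓ Bᗮ) ⊔ Zᗮ = ⊤ := by
  rw [inf_comm, sup_orthogonal_inf_of_hasOrthogonalProjection hBZ,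
    sup_orthogonal_of_hasOrthogonalProjection]

theorem orthogonal_decomposition_of_le {B Z : Submodule 𝕜 E} (hBZ : B ≤ Z)
    [B.HasOrthogonalProjection] [Z.HasOrthogonalProjection] :
    (∀ x ∈ B, ∀ y ∈ Z ⊓ Bᗮ, inner 𝕜 x y = 0) ∧
      (∀ x ∈ B, ∀ y ∈ Zᗮ, inner 𝕜 x y = 0) ∧
      (∀ x ∈ Z ⊓ Bᗮ, ∀ y ∈ Zᗮ, inner 𝕜 x y = 0) ∧
      B ⊔ (Z ⊓ Bᗮ) ⊔ Zᗮ = ⊤ :=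
  ⟨fun _ hx _ hy => inner_right_of_mem_orthogonal hx hy.2,
    fun _ hx _ hy => inner_right_of_mem_orthogonal (hBZ hx) hy,
    fun _ hx _ hy => inner_right_of_mem_orthogonal hx.1 hy,
    sup_inf_orthogonal_sup_orthogonal_eq_top hBZ⟩

end Submodule

theorem strong_hodge_decomposition_general
    {W0 W1 W2 : Type*}
    [NormedAddCommGroup W0] [InnerProductSpace ℝ W0]
    [NormedAddCommGroup W1] [InnerProductSpace ℝ W1] [CompleteSpace W1]
    [NormedAddCommGroup W2] [InnerProductSpace ℝ W2]
    (V0 : Submodule ℝ W0) (V1 : Submodule ℝ W1)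
    (d0 : V0 →ₗ[ℝ] W1) (d1 : V1 →ₗ[ℝ] W2)
    (hgraph1 : IsClosed {p : W1 × W2 | ∃ v : V1, (v : W1) = p.1 ∧ d1 v = p.2})
    (hsub : ∀ τ : V0, d0 τ ∈ V1)
    (hdd : ∀ τ : V0, d1 ⟨d0 τ, hsub τ⟩ = 0)
    (hBclosed : IsClosed (Set.range (⇑d0))) :
    ∀ (B Z : Submodule ℝ W1), B = LinearMap.range d0 →
      Z = (LinearMap.ker d1).map V1.subtype →
      (∀ x ∈ B, ∀ y ∈ Z ⊓ Bᗮ, ⟪x, y⟫ = 0) ∧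
      (∀ x ∈ B, ∀ y ∈ Zᗮ, ⟪x, y⟫ = 0) ∧
      (∀ x ∈ Z ⊓ Bᗮ, ∀ y ∈ Zᗮ, ⟪x, y⟫ = 0) ∧
      B ⊔ (Z ⊓ Bᗮ) ⊔ Zᗮ = ⊤ := by
  rintro B Z rfl rfl
  have : CompleteSpace (LinearMap.range d0) := hBclosed.completeSpace_coe
  have : CompleteSpace ((LinearMap.ker d1).map V1.subtype) :=
    (isClosed_map_ker_of_isClosed_graph hgraph1).completeSpace_coe
  exact Submodule.orthogonal_decomposition_of_le (range_le_map_ker_of_comp_eq_zero hsub hdd)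

/-- **Strong Hodge decomposition for a closed Hilbert complex.** Given a segment
`d0 : V0 ⊆ W0 → W1`, `d1 : V1 ⊆ W1 → W2` of a Hilbert complex (closed, densely
defined operators with `d0(V0) ⊆ V1` and `d1 ∘ d0 = 0`) such that the range
`B = d0(V0)` is closed in `W1`, the middle space decomposes as the internal
orthogonal direct sum `W1 = B ⊕ H ⊕ Zᗮ`, where `Z = ker d1` and `H = Z ⊓ Bᗮ`
is the harmonic space. -/
theorem strong_hodge_decomposition
    {W0 W1 W2 : Type*}
    [NormedAddCommGroup W0] [InnerProductSpace ℝ W0] [CompleteSpace W0]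
    [NormedAddCommGroup W1] [InnerProductSpace ℝ W1] [CompleteSpace W1]
    [NormedAddCommGroup W2] [InnerProductSpace ℝ W2] [CompleteSpace W2]
    (V0 : Submodule ℝ W0) (V1 : Submodule ℝ W1)
    (d0 : V0 →ₗ[ℝ] W1) (d1 : V1 →ₗ[ℝ] W2)
    (hV0dense : Dense (V0 : Set W0)) (hV1dense : Dense (V1 : Set W1))
    (hgraph0 : IsClosed {p : W0 × W1 | ∃ τ : V0, (τ : W0) = p.1 ∧ d0 τ = p.2})
    (hgraph1 : IsClosed {p : W1 × W2 | ∃ v : V1, (v : W1) = p.1 ∧ d1 v = p.2})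
    (hsub : ∀ τ : V0, d0 τ ∈ V1)
    (hdd : ∀ τ : V0, d1 ⟨d0 τ, hsub τ⟩ = 0)
    (hBclosed : IsClosed (Set.range (⇑d0))) :
    ∀ (B Z : Submodule ℝ W1), B = LinearMap.range d0 →
      Z = (LinearMap.ker d1).map V1.subtype →
      (∀ x ∈ B, ∀ y ∈ Z ⊓ Bᗮ, ⟪x, y⟫ = 0) ∧
      (∀ x ∈ B, ∀ y ∈ Zᗮ, ⟪x, y⟫ = 0) ∧
      (∀ x ∈ Z ⊓ Bᗮ, ∀ y ∈ Zᗮ, ⟪x, y⟫ = 0) ∧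
      B ⊔ (Z ⊓ Bᗮ) ⊔ Zᗮ = ⊤ :=
  strong_hodge_decomposition_general V0 V1 d0 d1 hgraph1 hsub hdd hBclosed
end

section
/- Let X and W be real Hilbert spaces, ι : X → W an injective bounded linear map with dense range, and K = ι* : W → X the Hilbert-space adjoint of ι, characterized by ⟨K f, v⟩_X = ⟨f, ι v⟩_W for all f ∈ W, v ∈ X. Suppose F : X → W is monotone (⟨F u − F v, ι u − ι v⟩_W ≥ 0 for all u, v ∈ X) and hemicontinuous (for all u, v ∈ X and w ∈ W, the real function t ↦ ⟨F(u + t v), w⟩_W is continuous on [0,1]). Then for every f ∈ W the abstract Hammerstein equation u + K(F u) = K f has a unique solution u ∈ X; moreover, if u and u' are the solutions corresponding to data f and f', then ‖u − u'‖_X ≤ ‖K‖ ‖f − f'‖_W, where ‖K‖ is the operator norm of K. -/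
/-!
Write `G u = u + K (F u)`. Adjointness turns monotonicity of `F` into strong monotonicity of `G`,
`‖u - v‖² ≤ ⟪G u - G v, u - v⟫`, which gives uniqueness and the Lipschitz bound at once.

Existence follows Minty's argument, with neither Brouwer's theorem nor weak compactness. For a finite
set `s` of test points in a large ball, a separating hyperplane in `ℝ^s` combined with monotonicity
yields a point `u` of the ball with `⟪G v - b, v - u⟫ ≥ 0` for all `v ∈ s`. These closed convex sets
decrease as `s` grows, and their minimal-norm points form a Cauchy net (parallelogram law), so the
sets have a common point. Hemicontinuity turns the resulting variational inequality into
`⟪G u - b, v - u⟫ ≥ 0` on the ball, and strong monotonicity keeps `u` inside the open ball, so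
`G u = b`.
-/

open scoped RealInnerProductSpace

open Set Filter Topology Metric

theorem exists_mem_stdSimplex_forall_sum_mul_neg {ι : Type*} [Fintype ι] {T : Set (ι → ℝ)}
    (hconv : Convex ℝ T) (hcomp : IsCompact T) (hne : T.Nonempty)
    (hneg : ∀ y ∈ T, ∃ i, y i < 0) :
    ∃ w ∈ stdSimplex ℝ ι, ∀ y ∈ T, ∑ i, w i * y i < 0 := by
  classical
  have hdisj : Disjoint T (Ici 0) := by
    refine Set.disjoint_left.2 fun y hy hy0 => ?_
    obtain ⟨i, hi⟩ := hneg y hy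
    exact (hy0 i).not_gt hi
  obtain ⟨f, a, b, hfT, hab, hfP⟩ :=
    geometric_hahn_banach_compact_closed hconv hcomp (convex_Ici 0) isClosed_Ici hdisj
  have hb : b < 0 := by simpa using hfP 0 (mem_Ici.2 le_rfl)
  set e : ι → ι → ℝ := fun i j => if i = j then 1 else 0
  set μ : ι → ℝ := fun i => f (e i)
  have hf : ∀ y, f y = ∑ i, μ i * y i := fun y => by
    rw [← ContinuousLinearMap.coe_coe, LinearMap.pi_apply_eq_sum_univ]
    exact Finset.sum_congr rfl fun i _ => mul_comm _ _
  -- `f` is bounded below on the cone `Ici 0`, hence nonnegative there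
  have hμ : ∀ i, 0 ≤ μ i := by
    intro i
    by_contra! hi
    have hmem : (b / μ i) • e i ∈ Ici 0 :=
      mem_Ici.2 <| smul_nonneg (div_nonneg_of_nonpos hb.le hi.le) fun j => by
        simp only [e, Pi.zero_apply]; split_ifs <;> norm_num
    have := hfP _ hmem
    rw [map_smul, smul_eq_mul, div_mul_cancel₀ _ hi.ne] at this
    exact this.false
  have hneg' : ∀ y ∈ T, ∑ i, μ i * y i < 0 := fun y hy =>
    hf y ▸ (hfT y hy).trans (hab.trans hb)
  obtain ⟨y₀, hy₀⟩ := hne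
  have hS : 0 < ∑ i, μ i := by
    obtain ⟨i, -, hi⟩ := Finset.exists_lt_of_sum_lt
      ((hneg' y₀ hy₀).trans_eq (Finset.sum_const_zero (s := Finset.univ)).symm)
    refine Finset.sum_pos' (fun i _ => hμ i) ⟨i, Finset.mem_univ _, (hμ i).lt_of_ne ?_⟩
    rintro h
    simp [← h] at hi
  refine ⟨fun i => μ i / ∑ j, μ j, ⟨fun i => div_nonneg (hμ i) hS.le, ?_⟩, fun y hy => ?_⟩
  · rw [← Finset.sum_div, div_self hS.ne']
  · calc ∑ i, μ i / (∑ j, μ j) * y i = (∑ i, μ i * y i) / ∑ j, μ j := by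
          rw [Finset.sum_div]; congr 1; ext i; ring
      _ < 0 := div_neg_of_neg_of_pos (hneg' y hy) hS

section InnerProductSpace

variable {X : Type*} [NormedAddCommGroup X] [InnerProductSpace ℝ X]

theorem sum_sum_mul_inner_sub_nonneg {ι : Type*} (s : Finset ι) {G : X → X}
    (hG : ∀ u v, 0 ≤ ⟪G u - G v, u - v⟫) (z : ι → X) {w : ι → ℝ} (hw : ∀ i ∈ s, 0 ≤ w i) :
    0 ≤ ∑ i ∈ s, ∑ j ∈ s, w i * w j * ⟪G (z i), z i - z j⟫ := by
  have hswap : ∑ i ∈ s, ∑ j ∈ s, w i * w j * ⟪G (z i), z i - z j⟫ =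
      ∑ i ∈ s, ∑ j ∈ s, w i * w j * ⟪G (z j), z j - z i⟫ := by
    rw [Finset.sum_comm]; simp only [mul_comm (w _) (w _)]
  have hsym : 2 * ∑ i ∈ s, ∑ j ∈ s, w i * w j * ⟪G (z i), z i - z j⟫ =
      ∑ i ∈ s, ∑ j ∈ s, w i * w j * ⟪G (z i) - G (z j), z i - z j⟫ := by
    rw [two_mul]
    nth_rewrite 2 [hswap]
    rw [← Finset.sum_add_distrib]
    refine Finset.sum_congr rfl fun i _ => ?_
    rw [← Finset.sum_add_distrib]
    refine Finset.sum_congr rfl fun j _ => ?_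
    rw [inner_sub_left, ← neg_sub (z i) (z j), inner_neg_right]
    ring
  have : 0 ≤ ∑ i ∈ s, ∑ j ∈ s, w i * w j * ⟪G (z i) - G (z j), z i - z j⟫ :=
    Finset.sum_nonneg fun i hi => Finset.sum_nonneg fun j hj =>
      mul_nonneg (mul_nonneg (hw i hi) (hw j hj)) (hG _ _)
  linarith

theorem exists_mem_convexHull_forall_inner_sub_nonneg {G : X → X}
    (hG : ∀ u v, 0 ≤ ⟪G u - G v, u - v⟫) {s : Finset X} (hs : s.Nonempty) :
    ∃ u ∈ convexHull ℝ (s : Set X), ∀ v ∈ s, 0 ≤ ⟪G v, v - u⟫ := by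
  by_contra! h
  set C := convexHull ℝ (s : Set X)
  let A : X → (s → ℝ) := fun u i => ⟪G i, i - u⟫
  have hA : ∀ (u u' : X) (a a' : ℝ), a + a' = 1 → A (a • u + a' • u') = a • A u + a' • A u' := by
    intro u u' a a' haa
    ext i
    simp only [A, Pi.add_apply, Pi.smul_apply, smul_eq_mul, inner_sub_right, inner_add_right,
      real_inner_smul_right]
    linear_combination -(⟪G i, (i : X)⟫) * haa
  have hconv : Convex ℝ (A '' C) := by
    rintro _ ⟨u, hu, rfl⟩ _ ⟨u', hu', rfl⟩ a a' ha ha' haa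
    exact ⟨_, convex_convexHull ℝ _ hu hu' ha ha' haa, hA u u' a a' haa⟩
  have hcomp : IsCompact (A '' C) :=
    (Set.Finite.isCompact_convexHull ℝ s.finite_toSet).image (continuous_pi fun i => by fun_prop)
  obtain ⟨w, ⟨hw0, hw1⟩, hw⟩ := exists_mem_stdSimplex_forall_sum_mul_neg hconv hcomp
    (((Finset.coe_nonempty.2 hs).mono (subset_convexHull ℝ _)).image A)
    (by rintro _ ⟨u, hu, rfl⟩; obtain ⟨v, hv, hlt⟩ := h u hu; exact ⟨⟨v, hv⟩, hlt⟩)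
  set c : X := ∑ j, w j • (j : X)
  have hc : c ∈ C := (convex_convexHull ℝ _).sum_mem (fun j _ => hw0 j) hw1
    fun j _ => subset_convexHull ℝ _ j.2
  have hsub : ∀ i : s, (i : X) - c = ∑ j, w j • ((i : X) - j) := fun i => by
    simp only [smul_sub, Finset.sum_sub_distrib, ← Finset.sum_smul, hw1, one_smul, c]
  have hexp : ∑ i, w i * A c i = ∑ i, ∑ j, w i * w j * ⟪G i, (i : X) - j⟫ := by
    refine Finset.sum_congr rfl fun i _ => ?_
    simp only [A, hsub, inner_sum, real_inner_smul_right, Finset.mul_sum, mul_assoc]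
  have := hw (A c) ⟨c, hc, rfl⟩
  rw [hexp] at this
  exact this.not_ge (sum_sum_mul_inner_sub_nonneg _ hG (fun i : s => (i : X)) fun j _ => hw0 j)

theorem inner_sub_nonneg_of_forall_inner_sub_nonneg {G : X → X} {C : Set X} (hC : Convex ℝ C)
    {u : X} (hu : u ∈ C) (hG : ∀ v ∈ C, 0 ≤ ⟪G v, v - u⟫)
    (hhemi : ∀ z, ContinuousOn (fun t : ℝ => ⟪G (u + t • z), z⟫) (Icc 0 1))
    {v : X} (hv : v ∈ C) : 0 ≤ ⟪G u, v - u⟫ := by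
  have hpos : ∀ t ∈ Ioc (0 : ℝ) 1, 0 ≤ ⟪G (u + t • (v - u)), v - u⟫ := by
    intro t ht
    have := hG _ (hC.add_smul_sub_mem hu hv (Ioc_subset_Icc_self ht))
    rw [add_sub_cancel_left, real_inner_smul_right] at this
    exact (mul_nonneg_iff_of_pos_left ht.1).1 this
  have h0 : (0 : ℝ) ∈ closure (Ioc 0 1) := by
    rw [closure_Ioc zero_ne_one]; exact ⟨le_rfl, zero_le_one⟩
  simpa using ContinuousWithinAt.closure_le h0 continuousWithinAt_const
    ((hhemi _ 0 ⟨le_rfl, zero_le_one⟩).mono Ioc_subset_Icc_self) hpos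

theorem eq_zero_of_forall_inner_sub_nonneg {C : Set X} {u c : X} (hC : C ∈ 𝓝 u)
    (h : ∀ v ∈ C, 0 ≤ ⟪c, v - u⟫) : c = 0 := by
  have hmin : IsLocalMin (innerSL ℝ c) u :=
    Filter.mem_of_superset hC fun v hv => by
      simpa [inner_sub_right] using h v hv
  have := hmin.hasFDerivAt_eq_zero (innerSL ℝ c).hasFDerivAt
  simpa using congrArg (fun L => L c) this

theorem norm_le_of_sq_le_inner {x a : X} (h : ‖x‖ ^ 2 ≤ ⟪a, x⟫) : ‖x‖ ≤ ‖a‖ := by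
  have := h.trans (real_inner_le_norm a x)
  nlinarith [norm_nonneg x, norm_nonneg a]

end InnerProductSpace

section CompleteSpace

variable {X : Type*} [NormedAddCommGroup X] [InnerProductSpace ℝ X] [CompleteSpace X]

theorem exists_mem_forall_norm_sub_sq_le {C : Set X} (hne : C.Nonempty) (hC : IsClosed C)
    (hconv : Convex ℝ C) : ∃ m ∈ C, ∀ x ∈ C, ‖x - m‖ ^ 2 ≤ ‖x‖ ^ 2 - ‖m‖ ^ 2 := by
  obtain ⟨m, hm, hmin⟩ := exists_norm_eq_iInf_of_complete_convex hne hC.isComplete hconv 0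
  refine ⟨m, hm, fun x hx => ?_⟩
  have hvar := (norm_eq_iInf_iff_real_inner_le_zero hconv hm).1 hmin x hx
  rw [zero_sub, inner_neg_left] at hvar
  have := norm_add_sq_real m (x - m)
  rw [add_sub_cancel] at this
  linarith

theorem Antitone.nonempty_iInter_of_isClosed_of_convex {ι : Type*} [SemilatticeSup ι] [Nonempty ι]
    {Φ : ι → Set X} (hΦ : Antitone Φ) (hne : ∀ i, (Φ i).Nonempty) (hclosed : ∀ i, IsClosed (Φ i))
    (hconv : ∀ i, Convex ℝ (Φ i)) {i₀ : ι} (hbdd : Bornology.IsBounded (Φ i₀)) :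
    (⋂ i, Φ i).Nonempty := by
  choose m hmΦ hm using fun i => exists_mem_forall_norm_sub_sq_le (hne i) (hclosed i) (hconv i)
  have hdist : ∀ ⦃i j⦄, i ≤ j → ‖m j - m i‖ ^ 2 ≤ ‖m j‖ ^ 2 - ‖m i‖ ^ 2 :=
    fun i j hij => hm i _ (hΦ hij (hmΦ j))
  obtain ⟨R, hR⟩ := hbdd.exists_norm_le
  have hbddA : BddAbove (range fun i => ‖m i‖ ^ 2) := by
    refine ⟨R ^ 2, forall_mem_range.2 fun i => ?_⟩
    have h1 := hdist (le_sup_left : i ≤ i ⊔ i₀)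
    have h2 := hR _ (hΦ le_sup_right (hmΦ (i ⊔ i₀)))
    nlinarith [sq_nonneg ‖m (i ⊔ i₀) - m i‖, norm_nonneg (m (i ⊔ i₀))]
  -- `‖m n - m N‖² ≤ ‖m n‖² - ‖m N‖²` is small once `‖m N‖²` is close to the supremum
  have hcauchy : CauchySeq m := by
    refine Metric.cauchySeq_iff'.2 fun ε hε => ?_
    obtain ⟨N, hN⟩ := exists_lt_of_lt_ciSup
      (sub_lt_self (⨆ i, ‖m i‖ ^ 2) (pow_pos hε 2))
    refine ⟨N, fun n hn => lt_of_pow_lt_pow_left₀ 2 hε.le ?_⟩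
    rw [dist_eq_norm]
    linarith [hdist hn, le_ciSup hbddA n]
  obtain ⟨x, hx⟩ := cauchySeq_tendsto_of_complete hcauchy
  exact ⟨x, mem_iInter.2 fun i => (hclosed i).mem_of_tendsto hx
    ((eventually_ge_atTop i).mono fun j hij => hΦ hij (hmΦ j))⟩

theorem exists_mem_closedBall_forall_inner_sub_nonneg {G : X → X}
    (hG : ∀ u v, 0 ≤ ⟪G u - G v, u - v⟫) {R : ℝ} (hR : 0 ≤ R) :
    ∃ u ∈ closedBall (0 : X) R, ∀ v ∈ closedBall (0 : X) R, 0 ≤ ⟪G v, v - u⟫ := by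
  classical
  set B := closedBall (0 : X) R
  let Φ : Finset X → Set X := fun s => B ∩ ⋂ v ∈ s, ⋂ (_ : v ∈ B), {u | ⟪G v, u⟫ ≤ ⟪G v, v⟫}
  have hΦne : ∀ s, (Φ s).Nonempty := by
    intro s
    obtain ⟨u, hu, hv⟩ := exists_mem_convexHull_forall_inner_sub_nonneg hG
      (Finset.insert_nonempty 0 (s.filter (· ∈ B)))
    have hsub : ((insert 0 (s.filter (· ∈ B)) : Finset X) : Set X) ⊆ B := by
      intro v hv
      rcases Finset.mem_insert.1 hv with rfl | hv
      · exact mem_closedBall_self hR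
      · exact (Finset.mem_filter.1 hv).2
    refine ⟨u, convexHull_min hsub (convex_closedBall _ _) hu, mem_iInter₂.2 fun v hvs => ?_⟩
    refine mem_iInter.2 fun hvB => ?_
    have := hv v (Finset.mem_insert_of_mem (Finset.mem_filter.2 ⟨hvs, hvB⟩))
    rwa [inner_sub_right, sub_nonneg] at this
  have hΦclosed : ∀ s, IsClosed (Φ s) := fun s =>
    isClosed_closedBall.inter <| isClosed_biInter fun v _ => isClosed_iInter fun _ =>
      isClosed_le (by fun_prop) continuous_const
  have hΦconv : ∀ s, Convex ℝ (Φ s) := fun s =>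
    (convex_closedBall _ _).inter <| convex_iInter₂ fun v _ => convex_iInter fun _ =>
      convex_halfSpace_le (innerₛₗ ℝ (G v)).isLinear _
  have hΦanti : Antitone Φ := fun s t hst =>
    inter_subset_inter_right _ (biInter_subset_biInter_left hst)
  obtain ⟨u, hu⟩ := hΦanti.nonempty_iInter_of_isClosed_of_convex hΦne hΦclosed hΦconv
    (i₀ := ∅) (isBounded_closedBall.subset inter_subset_left)
  refine ⟨u, (mem_iInter.1 hu ∅).1, fun v hv => ?_⟩
  have := (mem_iInter.1 hu {v}).2
  simp only [Finset.mem_singleton, iInter_iInter_eq_left, mem_iInter] at this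
  rw [inner_sub_right, sub_nonneg]
  exact this hv

theorem exists_eq_zero_of_strongly_monotone {G : X → X}
    (hG : ∀ u v, ‖u - v‖ ^ 2 ≤ ⟪G u - G v, u - v⟫)
    (hhemi : ∀ u z y : X, ContinuousOn (fun t : ℝ => ⟪G (u + t • z), y⟫) (Icc 0 1)) :
    ∃ u, G u = 0 := by
  set R := ‖G 0‖ + 1
  have hR : 0 ≤ R := by positivity
  obtain ⟨u, huR, hweak⟩ := exists_mem_closedBall_forall_inner_sub_nonneg
    (fun u v => (sq_nonneg _).trans (hG u v)) hR
  have hminty : ∀ v ∈ closedBall (0 : X) R, 0 ≤ ⟪G u, v - u⟫ := fun v hv =>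
    inner_sub_nonneg_of_forall_inner_sub_nonneg (convex_closedBall _ _) huR hweak
      (fun z => hhemi u z z) hv
  -- testing with `v = 0` gives the a priori bound `‖u‖ ≤ ‖G 0‖ < R`
  have hu_lt : ‖u‖ < R := by
    have h0 := hminty 0 (mem_closedBall_self hR)
    have hsm := hG u 0
    rw [zero_sub, inner_neg_right] at h0
    rw [sub_zero, inner_sub_left] at hsm
    have := norm_le_of_sq_le_inner (a := -G 0) (x := u) (by rw [inner_neg_left]; linarith)
    rw [norm_neg] at this
    exact this.trans_lt (lt_add_one _)
  exact ⟨u, eq_zero_of_forall_inner_sub_nonneg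
    (mem_of_superset (isOpen_ball.mem_nhds (mem_ball_zero_iff.2 hu_lt)) ball_subset_closedBall)
    hminty⟩

theorem surjective_of_strongly_monotone {G : X → X}
    (hG : ∀ u v, ‖u - v‖ ^ 2 ≤ ⟪G u - G v, u - v⟫)
    (hhemi : ∀ u z y : X, ContinuousOn (fun t : ℝ => ⟪G (u + t • z), y⟫) (Icc 0 1)) :
    Function.Surjective G := fun b => by
  obtain ⟨u, hu⟩ := exists_eq_zero_of_strongly_monotone (G := fun u => G u - b)
    (by simpa only [sub_sub_sub_cancel_right] using hG)
    (fun u z y => by simp only [inner_sub_left]; exact (hhemi u z y).sub continuousOn_const)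
  exact ⟨u, sub_eq_zero.1 hu⟩

end CompleteSpace

section Hammerstein

variable {X W : Type*} [NormedAddCommGroup X] [InnerProductSpace ℝ X]
  [NormedAddCommGroup W] [InnerProductSpace ℝ W] {ι : X →L[ℝ] W} {K : W →L[ℝ] X} {F : X → W}

theorem hammerstein_norm_sub_sq_le_inner (hK : ∀ f v, ⟪K f, v⟫ = ⟪f, ι v⟫)
    (hmono : ∀ u v, 0 ≤ ⟪F u - F v, ι u - ι v⟫) (u v : X) :
    ‖u - v‖ ^ 2 ≤ ⟪(u + K (F u)) - (v + K (F v)), u - v⟫ := by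
  rw [add_sub_add_comm, ← map_sub, inner_add_left, real_inner_self_eq_norm_sq, hK, map_sub]
  linarith [hmono u v]

theorem hammerstein_continuousOn_inner (hK : ∀ f v, ⟪K f, v⟫ = ⟪f, ι v⟫)
    (hhemi : ∀ u v : X, ∀ w : W, ContinuousOn (fun t : ℝ => ⟪F (u + t • v), w⟫) (Icc 0 1))
    (u z y : X) :
    ContinuousOn (fun t : ℝ => ⟪(u + t • z) + K (F (u + t • z)), y⟫) (Icc 0 1) := by
  simp only [inner_add_left, hK]
  exact (Continuous.continuousOn (by fun_prop)).add (hhemi u z (ι y))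

end Hammerstein

theorem hammerstein_wellposed_general
    {X W : Type*}
    [NormedAddCommGroup X] [InnerProductSpace ℝ X] [CompleteSpace X]
    [NormedAddCommGroup W] [InnerProductSpace ℝ W]
    (ι : X →L[ℝ] W)
    (K : W →L[ℝ] X) (hK : ∀ (f : W) (v : X), ⟪K f, v⟫ = ⟪f, ι v⟫)
    (F : X → W)
    (hmono : ∀ u v : X, 0 ≤ ⟪F u - F v, ι u - ι v⟫)
    (hhemi : ∀ u v : X, ∀ w : W,
      ContinuousOn (fun t : ℝ => ⟪F (u + t • v), w⟫) (Set.Icc 0 1)) :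
    (∀ f : W, ∃! u : X, u + K (F u) = K f) ∧
    ∀ (f f' : W) (u u' : X), u + K (F u) = K f → u' + K (F u') = K f' →
      ‖u - u'‖ ≤ ‖K‖ * ‖f - f'‖ := by
  have hstab : ∀ (f f' : W) (u u' : X), u + K (F u) = K f → u' + K (F u') = K f' →
      ‖u - u'‖ ≤ ‖K‖ * ‖f - f'‖ := fun f f' u u' hu hu' =>
    calc ‖u - u'‖ ≤ ‖(u + K (F u)) - (u' + K (F u'))‖ :=
          norm_le_of_sq_le_inner (hammerstein_norm_sub_sq_le_inner hK hmono u u')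
      _ = ‖K (f - f')‖ := by rw [hu, hu', map_sub]
      _ ≤ ‖K‖ * ‖f - f'‖ := K.le_opNorm _
  refine ⟨fun f => ?_, hstab⟩
  obtain ⟨u, hu⟩ := surjective_of_strongly_monotone (hammerstein_norm_sub_sq_le_inner hK hmono)
    (hammerstein_continuousOn_inner hK hhemi) (K f)
  refine ⟨u, hu, fun u' hu' => ?_⟩
  have := hstab f f u' u hu' hu
  rw [sub_self, norm_zero, mul_zero] at this
  exact sub_eq_zero.1 (norm_le_zero_iff.1 this)

/-- **Well-posedness of the abstract Hammerstein equation.** Let `ι : X → W` be an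
injective bounded linear map between real Hilbert spaces with dense range, and let
`K = ι*` be its adjoint, characterized by `⟪K f, v⟫_X = ⟪f, ι v⟫_W`.  If
`F : X → W` is monotone and hemicontinuous, then for every `f ∈ W` the abstract
Hammerstein equation `u + K (F u) = K f` has a unique solution `u ∈ X`, and the
solutions depend Lipschitz-continuously on the data:
`‖u − u'‖_X ≤ ‖K‖ ‖f − f'‖_W`. -/
theorem hammerstein_wellposed
    {X W : Type*}
    [NormedAddCommGroup X] [InnerProductSpace ℝ X] [CompleteSpace X]
    [NormedAddCommGroup W] [InnerProductSpace ℝ W] [CompleteSpace W]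
    (ι : X →L[ℝ] W) (hinj : Function.Injective ι)
    (hdense : Dense (Set.range (⇑ι)))
    (K : W →L[ℝ] X) (hK : ∀ (f : W) (v : X), ⟪K f, v⟫ = ⟪f, ι v⟫)
    (F : X → W)
    (hmono : ∀ u v : X, 0 ≤ ⟪F u - F v, ι u - ι v⟫)
    (hhemi : ∀ u v : X, ∀ w : W,
      ContinuousOn (fun t : ℝ => ⟪F (u + t • v), w⟫) (Set.Icc 0 1)) :
    (∀ f : W, ∃! u : X, u + K (F u) = K f) ∧
    ∀ (f f' : W) (u u' : X), u + K (F u) = K f → u' + K (F u') = K f' →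
      ‖u - u'‖ ≤ ‖K‖ * ‖f - f'‖ :=
  hammerstein_wellposed_general ι K hK F hmono hhemi
end

section
/- Let H be a real Hilbert space and A : H → H a map that is hemicontinuous (for all u, v, w ∈ H the real function t ↦ ⟨A(u + t v), w⟩ is continuous on [0,1]) and strongly monotone with constant c > 0 (⟨A u − A v, u − v⟩ ≥ c ‖u − v‖² for all u, v ∈ H). Then A is a bijection of H onto H, and its inverse is Lipschitz continuous with constant c⁻¹: ‖A⁻¹ x − A⁻¹ y‖ ≤ c⁻¹ ‖x − y‖ for all x, y ∈ H. (Browder–Minty theorem, in the form used to solve abstract Hammerstein equations.) -/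
/-!
Strong monotonicity makes `A` injective with a `c⁻¹`-Lipschitz inverse, so the content is
surjectivity. By Minty's trick (hemicontinuity), `A u = f` as soon as
`c ‖w - u‖² ≤ ⟪A w - f, w - u⟫` for every `w`; these are closed-ball conditions on `2c u`, with
centres `2c w - A w` and radii `‖f - A w‖`, and strong monotonicity says exactly that the centres
are at most as far apart as the points `A w`. Kirszbraun's one-point extension lemma then gives a
common point. For finitely many balls, minimise the largest excess `‖z - x i‖² - ‖y₀ - y i‖²` over
the convex hull of the centres: a minimiser lies in the hull of the maximal terms, and the
variance identity bounds their weighted mean by `0`. In a Hilbert space, closed convex sets with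
the finite intersection property, one of them bounded, meet (their least-norm points form a
Cauchy net), which passes from finitely many balls to all of them.
-/

open scoped RealInnerProductSpace
open Set Filter Topology

section

variable {H : Type*} [NormedAddCommGroup H] [InnerProductSpace ℝ H]

theorem exists_norm_sub_sq_add_le {K : Set H} (hne : K.Nonempty) (hK : IsComplete K)
    (hcv : Convex ℝ K) (z : H) : ∃ p ∈ K, ∀ v ∈ K, ‖v - p‖ ^ 2 + ‖p - z‖ ^ 2 ≤ ‖v - z‖ ^ 2 := by
  obtain ⟨p, hpK, hp⟩ := exists_norm_eq_iInf_of_complete_convex hne hK hcv z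
  refine ⟨p, hpK, fun v hv => ?_⟩
  have hinner := (norm_eq_iInf_iff_real_inner_le_zero hcv hpK).1 hp v hv
  have hsplit : v - z = (v - p) + (p - z) := by abel
  rw [hsplit, norm_add_sq_real, ← neg_sub z p, inner_neg_right, real_inner_comm]
  linarith

theorem sum_mul_norm_sub_sq_eq {ι : Type*} (s : Finset ι) {w : ι → ℝ} (hw : ∑ i ∈ s, w i = 1)
    (x : ι → H) (p : H) :
    ∑ i ∈ s, w i * ‖p - x i‖ ^ 2 =
      ∑ i ∈ s, w i * ‖(∑ j ∈ s, w j • x j) - x i‖ ^ 2 + ‖p - ∑ j ∈ s, w j • x j‖ ^ 2 := by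
  set c := ∑ j ∈ s, w j • x j
  have hcross : ∑ i ∈ s, w i * ⟪p - c, c - x i⟫ = 0 := by
    have hbal : ∑ i ∈ s, w i • (c - x i) = 0 := by
      rw [Finset.sum_congr rfl fun i _ => smul_sub (w i) c (x i), Finset.sum_sub_distrib,
        ← Finset.sum_smul, hw, one_smul, sub_self]
    simp_rw [← real_inner_smul_right, ← inner_sum, hbal, inner_zero_right]
  have hsplit : ∀ i, ‖p - x i‖ ^ 2 = ‖p - c‖ ^ 2 + 2 * ⟪p - c, c - x i⟫ + ‖c - x i‖ ^ 2 := by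
    intro i
    rw [← norm_add_sq_real]
    congr 2
    abel
  simp_rw [hsplit, mul_add, Finset.sum_add_distrib, ← Finset.sum_mul, hw, mul_left_comm _ (2 : ℝ),
    ← Finset.mul_sum, hcross]
  ring

theorem sum_sum_mul_norm_sub_sq_eq {ι : Type*} (s : Finset ι) {w : ι → ℝ}
    (hw : ∑ i ∈ s, w i = 1) (x : ι → H) :
    ∑ i ∈ s, ∑ j ∈ s, w i * w j * ‖x i - x j‖ ^ 2 =
      2 * ∑ i ∈ s, w i * ‖(∑ j ∈ s, w j • x j) - x i‖ ^ 2 := by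
  have hrow (i : ι) := sum_mul_norm_sub_sq_eq s hw x (x i)
  simp_rw [mul_assoc, ← Finset.mul_sum, hrow, mul_add, Finset.sum_add_distrib,
    ← Finset.sum_mul, hw, one_mul, norm_sub_rev (x _) (∑ j ∈ s, w j • x j)]
  ring

theorem sum_mul_norm_sub_sq_le {ι : Type*} (s : Finset ι) {w : ι → ℝ}
    (hw₀ : ∀ i ∈ s, 0 ≤ w i) (hw : ∑ i ∈ s, w i = 1) {x y : ι → H}
    (hxy : ∀ i ∈ s, ∀ j ∈ s, ‖x i - x j‖ ≤ ‖y i - y j‖) (y₀ : H) :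
    ∑ i ∈ s, w i * ‖(∑ j ∈ s, w j • x j) - x i‖ ^ 2 ≤ ∑ i ∈ s, w i * ‖y₀ - y i‖ ^ 2 := by
  have hpairs : ∑ i ∈ s, ∑ j ∈ s, w i * w j * ‖x i - x j‖ ^ 2 ≤
      ∑ i ∈ s, ∑ j ∈ s, w i * w j * ‖y i - y j‖ ^ 2 :=
    Finset.sum_le_sum fun i hi => Finset.sum_le_sum fun j hj =>
      mul_le_mul_of_nonneg_left (pow_le_pow_left₀ (norm_nonneg _) (hxy i hi j hj) 2)
        (mul_nonneg (hw₀ i hi) (hw₀ j hj))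
  rw [sum_sum_mul_norm_sub_sq_eq s hw, sum_sum_mul_norm_sub_sq_eq s hw] at hpairs
  rw [sum_mul_norm_sub_sq_eq s hw y y₀]
  nlinarith [sq_nonneg ‖y₀ - ∑ j ∈ s, w j • y j‖]

theorem exists_norm_sub_le_of_mem_convexHull {ι : Type*} {t : Set ι} {x y : ι → H}
    (hxy : ∀ i ∈ t, ∀ j ∈ t, ‖x i - x j‖ ≤ ‖y i - y j‖) (y₀ : H) {z : H}
    (hz : z ∈ convexHull ℝ (x '' t)) : ∃ i ∈ t, ‖z - x i‖ ≤ ‖y₀ - y i‖ := by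
  obtain ⟨κ, _, w, p, hw₀, hw, hp, rfl⟩ := mem_convexHull_iff_exists_fintype.1 hz
  choose k hkt hk using hp
  obtain rfl : p = fun a => x (k a) := funext fun a => (hk a).symm
  have hxy' : ∀ a ∈ Finset.univ, ∀ b ∈ Finset.univ, ‖x (k a) - x (k b)‖ ≤ ‖y (k a) - y (k b)‖ :=
    fun a _ b _ => hxy _ (hkt a) _ (hkt b)
  have hsum := sum_mul_norm_sub_sq_le Finset.univ (fun a _ => hw₀ a) hw hxy' y₀
  obtain ⟨a, -, hwa⟩ := Finset.exists_lt_of_sum_lt (s := Finset.univ) (f := 0) (g := w)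
    (by simp [hw])
  by_contra! hfar
  refine hsum.not_gt (Finset.sum_lt_sum (fun b _ => ?_) ⟨a, Finset.mem_univ a, ?_⟩)
  · exact mul_le_mul_of_nonneg_left
      (pow_le_pow_left₀ (norm_nonneg _) (hfar _ (hkt b)).le 2) (hw₀ b)
  · exact mul_lt_mul_of_pos_left (pow_lt_pow_left₀ (hfar _ (hkt a)) (norm_nonneg _) two_ne_zero)
      hwa

theorem norm_add_smul_sub_sq_le {z p v : H} (hp : ‖v - p‖ ^ 2 + ‖p - z‖ ^ 2 ≤ ‖v - z‖ ^ 2)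
    {t : ℝ} (ht₀ : 0 ≤ t) (ht₁ : t ≤ 1) :
    ‖z + t • (p - z) - v‖ ^ 2 ≤ ‖z - v‖ ^ 2 - t * ‖p - z‖ ^ 2 := by
  have h₁ : z + t • (p - z) - v = (z - v) + t • (p - z) := by abel
  have h₂ : v - p = -((z - v) + (p - z)) := by abel
  have h₃ : v - z = -(z - v) := by abel
  rw [h₂, h₃, norm_neg, norm_neg, norm_add_sq_real] at hp
  rw [h₁, norm_add_sq_real, norm_smul, inner_smul_right, mul_pow, Real.norm_eq_abs, sq_abs]
  nlinarith [mul_le_mul_of_nonneg_left hp ht₀,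
    mul_nonneg (mul_nonneg ht₀ (sub_nonneg.2 ht₁)) (sq_nonneg ‖p - z‖)]

theorem mem_convexHull_of_isMinOn_sup' {ι : Type*} {s : Finset ι} (hs : s.Nonempty) (x : ι → H)
    (r : ι → ℝ) {z : H} (hzK : z ∈ convexHull ℝ (x '' s))
    (hmin : IsMinOn (fun v => s.sup' hs fun i => ‖v - x i‖ ^ 2 - r i) (convexHull ℝ (x '' s)) z) :
    z ∈ convexHull ℝ
      (x '' {i | i ∈ s ∧ (s.sup' hs fun j => ‖z - x j‖ ^ 2 - r j) ≤ ‖z - x i‖ ^ 2 - r i}) := by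
  set G : H → ℝ := fun v => s.sup' hs fun i => ‖v - x i‖ ^ 2 - r i
  set T : Set ι := {i | i ∈ s ∧ G z ≤ ‖z - x i‖ ^ 2 - r i}
  by_contra hzC
  have hTne : T.Nonempty := by
    obtain ⟨i, hi, hGi⟩ := Finset.exists_mem_eq_sup' hs fun i => ‖z - x i‖ ^ 2 - r i
    exact ⟨i, hi, hGi.le⟩
  have hTfin : T.Finite := s.finite_toSet.subset fun i hi => hi.1
  obtain ⟨p, hpC, hp⟩ := exists_norm_sub_sq_add_le (hTne.image x).convexHull
    ((hTfin.image x).isCompact_convexHull (𝕜 := ℝ)).isComplete (convex_convexHull ℝ _) z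
  have hpz : 0 < ‖p - z‖ ^ 2 := by
    have : p - z ≠ 0 := sub_ne_zero.2 fun h => hzC (h ▸ hpC)
    positivity
  -- Moving from `z` towards `p` strictly lowers every maximal term and keeps the others below.
  have hterm : ∀ i ∈ s, ∀ᶠ t in 𝓝[>] (0 : ℝ), ‖z + t • (p - z) - x i‖ ^ 2 - r i < G z := by
    intro i hi
    by_cases hiT : G z ≤ ‖z - x i‖ ^ 2 - r i
    · have hGi : ‖z - x i‖ ^ 2 - r i ≤ G z := Finset.le_sup' (fun j => ‖z - x j‖ ^ 2 - r j) hi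
      filter_upwards [Ioc_mem_nhdsGT zero_lt_one] with t ⟨ht₀, ht₁⟩
      have := norm_add_smul_sub_sq_le
        (hp (x i) (subset_convexHull ℝ _ (mem_image_of_mem x ⟨hi, hiT⟩))) ht₀.le ht₁
      nlinarith [mul_pos ht₀ hpz]
    · have hcont : Continuous fun t : ℝ => ‖z + t • (p - z) - x i‖ ^ 2 - r i := by fun_prop
      have hlim := hcont.continuousWithinAt (s := Ioi 0) (x := 0) |>.tendsto
      rw [zero_smul, add_zero] at hlim
      exact hlim.eventually_lt_const (not_le.1 hiT)
  obtain ⟨t, ⟨ht₀, ht₁⟩, hlt⟩ :=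
    ((Filter.eventually_of_mem (Ioc_mem_nhdsGT zero_lt_one) fun _ ht => ht).and
      ((Filter.eventually_all_finset s).2 hterm)).exists
  have hmem : z + t • (p - z) ∈ convexHull ℝ (x '' s) :=
    (convex_convexHull ℝ _).add_smul_sub_mem hzK
      (convexHull_mono (image_mono fun i hi => hi.1) hpC) ⟨ht₀.le, ht₁⟩
  exact (hmin hmem).not_gt ((Finset.sup'_lt_iff _).2 hlt)

theorem kirszbraun_finset {ι : Type*} (s : Finset ι) {x y : ι → H}
    (hxy : ∀ i ∈ s, ∀ j ∈ s, ‖x i - x j‖ ≤ ‖y i - y j‖) (y₀ : H) :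
    ∃ z, ∀ i ∈ s, ‖z - x i‖ ≤ ‖y₀ - y i‖ := by
  rcases s.eq_empty_or_nonempty with rfl | hs
  · exact ⟨0, by simp⟩
  have hK : IsCompact (convexHull ℝ (x '' s)) :=
    (s.finite_toSet.image x).isCompact_convexHull (𝕜 := ℝ)
  obtain ⟨z, hzK, hmin⟩ := hK.exists_isMinOn ((s.coe_nonempty.2 hs).image x).convexHull
    (f := fun v => s.sup' hs fun i => ‖v - x i‖ ^ 2 - ‖y₀ - y i‖ ^ 2)
    (Continuous.finset_sup'_apply hs fun i _ => by fun_prop).continuousOn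
  obtain ⟨i, ⟨-, hGi⟩, hi⟩ := exists_norm_sub_le_of_mem_convexHull
    (fun i hi j hj => hxy i hi.1 j hj.1) y₀ (mem_convexHull_of_isMinOn_sup' hs x _ hzK hmin)
  refine ⟨z, fun j hj => ?_⟩
  have hGj := Finset.le_sup' (fun j => ‖z - x j‖ ^ 2 - ‖y₀ - y j‖ ^ 2) hj
  have hi' := pow_le_pow_left₀ (norm_nonneg _) hi 2
  exact (pow_le_pow_iff_left₀ (norm_nonneg _) (norm_nonneg _) two_ne_zero).1 (by linarith)

theorem nonempty_iInter_of_convex_of_isClosed [CompleteSpace H] {ι : Type*} {K : ι → Set H}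
    (hcv : ∀ i, Convex ℝ (K i)) (hcl : ∀ i, IsClosed (K i))
    (hbdd : ∃ i, Bornology.IsBounded (K i)) (hfin : ∀ s : Finset ι, (⋂ i ∈ s, K i).Nonempty) :
    (⋂ i, K i).Nonempty := by
  classical
  obtain ⟨i₀, hi₀⟩ := hbdd
  obtain ⟨R, hR⟩ := isBounded_iff_forall_norm_le.1 hi₀
  have hproj (s : Finset ι) := exists_norm_sub_sq_add_le (hfin s)
    (isClosed_biInter fun i _ => hcl i).isComplete (convex_iInter₂ fun i _ => hcv i) 0
  choose m hmK hm using hproj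
  simp only [sub_zero] at hm
  have hstep {s t : Finset ι} (hst : s ⊆ t) : ‖m t - m s‖ ^ 2 + ‖m s‖ ^ 2 ≤ ‖m t‖ ^ 2 :=
    hm s (m t) (Set.biInter_subset_biInter_left hst (hmK t))
  have hbound (s : Finset ι) : ‖m s‖ ^ 2 ≤ R ^ 2 := by
    have hins := hstep (Finset.subset_insert i₀ s)
    have hR' := hR _ (Set.mem_iInter₂.1 (hmK (insert i₀ s)) i₀ (Finset.mem_insert_self i₀ s))
    nlinarith [norm_nonneg (m (insert i₀ s)), sq_nonneg ‖m (insert i₀ s) - m s‖]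
  have hbdd : BddAbove (Set.range fun s => ‖m s‖ ^ 2) := ⟨R ^ 2, by
    rintro _ ⟨s, rfl⟩
    exact hbound s⟩
  have hcauchy : CauchySeq m := by
    refine Metric.cauchySeq_iff'.2 fun ε hε => ?_
    obtain ⟨N, hN⟩ := exists_lt_of_lt_ciSup (sub_lt_self (⨆ s, ‖m s‖ ^ 2) (pow_pos hε 2))
    refine ⟨N, fun s hs => ?_⟩
    have hsN := hstep hs
    have hs_le : ‖m s‖ ^ 2 ≤ ⨆ s, ‖m s‖ ^ 2 := le_ciSup hbdd s
    rw [dist_eq_norm]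
    exact lt_of_pow_lt_pow_left₀ 2 hε.le (by linarith)
  obtain ⟨z, hz⟩ := cauchySeq_tendsto_of_complete hcauchy
  refine ⟨z, Set.mem_iInter.2 fun i => (hcl i).mem_of_tendsto hz ?_⟩
  filter_upwards [Filter.eventually_ge_atTop {i}] with s hs
  exact Set.mem_iInter₂.1 (hmK s) i (hs (Finset.mem_singleton_self i))

theorem kirszbraun [CompleteSpace H] {ι : Type*} {x y : ι → H}
    (hxy : ∀ i j, ‖x i - x j‖ ≤ ‖y i - y j‖) (y₀ : H) : ∃ z, ∀ i, ‖z - x i‖ ≤ ‖y₀ - y i‖ := by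
  cases isEmpty_or_nonempty ι with
  | inl _ => exact ⟨0, isEmptyElim⟩
  | inr hι =>
    obtain ⟨z, hz⟩ := nonempty_iInter_of_convex_of_isClosed
      (K := fun i => Metric.closedBall (x i) ‖y₀ - y i‖) (fun i => convex_closedBall _ _)
      (fun i => Metric.isClosed_closedBall) ⟨hι.some, Metric.isBounded_closedBall⟩
      fun s => by
        obtain ⟨z, hz⟩ := kirszbraun_finset s (fun i _ j _ => hxy i j) y₀
        exact ⟨z, Set.mem_iInter₂.2 fun i hi => mem_closedBall_iff_norm.2 (hz i hi)⟩
    exact ⟨z, fun i => mem_closedBall_iff_norm.1 (Set.mem_iInter.1 hz i)⟩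

theorem apply_eq_of_forall_inner_nonneg {A : H → H} {u v : H}
    (hA : ∀ d : H, ContinuousOn (fun t : ℝ => ⟪A (u + t • d), d⟫) (Icc 0 1))
    (h : ∀ w, 0 ≤ ⟪A w - v, w - u⟫) : A u = v := by
  have hdir (d : H) : ⟪v, d⟫ ≤ ⟪A u, d⟫ := by
    have hlim : Tendsto (fun t : ℝ => ⟪A (u + t • d), d⟫) (𝓝[Ioc 0 1] 0) (𝓝 ⟪A u, d⟫) := by
      simpa using ((hA d 0 ⟨le_rfl, zero_le_one⟩).mono Ioc_subset_Icc_self).tendsto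
    have := left_nhdsWithin_Ioc_neBot (zero_lt_one' ℝ)
    refine ge_of_tendsto hlim (eventually_nhdsWithin_of_forall fun t ht => ?_)
    have hw := h (u + t • d)
    rw [add_sub_cancel_left, inner_smul_right, inner_sub_left] at hw
    nlinarith [ht.1]
  have hself := hdir (v - A u)
  rw [← sub_nonneg, ← inner_sub_left, ← neg_sub (A u) v, inner_neg_right,
    real_inner_self_eq_norm_sq] at hself
  exact sub_eq_zero.1 (norm_eq_zero.1 (by nlinarith [norm_nonneg (A u - v)]))

theorem norm_two_mul_smul_sub_le_norm_iff {c : ℝ} (hc : 0 < c) (a d : H) :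
    ‖(2 * c) • d - a‖ ≤ ‖a‖ ↔ c * ‖d‖ ^ 2 ≤ ⟪a, d⟫ := by
  rw [← sq_le_sq₀ (norm_nonneg _) (norm_nonneg _), norm_sub_sq_real, norm_smul,
    real_inner_smul_left, real_inner_comm, Real.norm_eq_abs, abs_of_pos (by positivity)]
  constructor <;> intro h <;> nlinarith

theorem mul_norm_le_norm_of_mul_sq_le_inner {c : ℝ} {a d : H} (h : c * ‖d‖ ^ 2 ≤ ⟪a, d⟫) :
    c * ‖d‖ ≤ ‖a‖ := by
  rcases (norm_nonneg d).eq_or_lt with hd | hd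
  · rw [← hd, mul_zero]
    exact norm_nonneg a
  · refine le_of_mul_le_mul_right ?_ hd
    calc c * ‖d‖ * ‖d‖ = c * ‖d‖ ^ 2 := by ring
      _ ≤ ⟪a, d⟫ := h
      _ ≤ ‖a‖ * ‖d‖ := real_inner_le_norm a d

theorem surjective_of_strongly_monotone_s5 [CompleteSpace H] {A : H → H} {c : ℝ} (hc : 0 < c)
    (hhemi : ∀ u v w : H, ContinuousOn (fun t : ℝ => ⟪A (u + t • v), w⟫) (Icc 0 1))
    (hmono : ∀ u v : H, c * ‖u - v‖ ^ 2 ≤ ⟪A u - A v, u - v⟫) : Function.Surjective A := by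
  intro f
  obtain ⟨z, hz⟩ := kirszbraun (x := fun w => (2 * c) • w - A w) (y := A) (fun v w => by
    rw [show (2 * c) • v - A v - ((2 * c) • w - A w) = (2 * c) • (v - w) - (A v - A w) by
      rw [smul_sub]; abel]
    exact (norm_two_mul_smul_sub_le_norm_iff hc _ _).2 (hmono v w)) f
  refine ⟨(2 * c)⁻¹ • (z + f), apply_eq_of_forall_inner_nonneg (fun d => hhemi _ d d) fun w => ?_⟩
  have hball := hz w
  rw [← norm_neg, norm_sub_rev f,
    show -(z - ((2 * c) • w - A w)) = (2 * c) • (w - (2 * c)⁻¹ • (z + f)) - (A w - f) by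
      rw [smul_sub, smul_inv_smul₀ (by positivity)]; abel] at hball
  exact le_trans (by positivity) ((norm_two_mul_smul_sub_le_norm_iff hc _ _).1 hball)

end

/-- **Browder–Minty theorem** (in the form used to solve abstract Hammerstein
equations): a hemicontinuous, strongly monotone map `A : H → H` on a real Hilbert
space is a bijection of `H` onto `H`, and its inverse is Lipschitz continuous
with constant `c⁻¹`. -/
theorem browder_minty
    {H : Type*} [NormedAddCommGroup H] [InnerProductSpace ℝ H] [CompleteSpace H]
    (A : H → H) (c : ℝ) (hc : 0 < c)
    (hhemi : ∀ u v w : H,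
      ContinuousOn (fun t : ℝ => ⟪A (u + t • v), w⟫) (Set.Icc 0 1))
    (hmono : ∀ u v : H, c * ‖u - v‖ ^ 2 ≤ ⟪A u - A v, u - v⟫) :
    Function.Bijective A ∧
    ∀ x y : H, ‖Function.invFun A x - Function.invFun A y‖ ≤ c⁻¹ * ‖x - y‖ := by
  have hlower (u v : H) : c * ‖u - v‖ ≤ ‖A u - A v‖ :=
    mul_norm_le_norm_of_mul_sq_le_inner (hmono u v)
  have hinj : Function.Injective A := fun u v huv => by
    have h := hlower u v
    rw [huv, sub_self, norm_zero] at h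
    exact sub_eq_zero.1 (norm_le_zero_iff.1 (nonpos_of_mul_nonpos_right h hc))
  have hsurj := surjective_of_strongly_monotone_s5 hc hhemi hmono
  refine ⟨⟨hinj, hsurj⟩, fun x y => (le_inv_mul_iff₀ hc).2 ?_⟩
  simpa only [Function.invFun_eq (hsurj x), Function.invFun_eq (hsurj y)] using
    hlower (Function.invFun A x) (Function.invFun A y)
end

section
/- Consider a closed Hilbert complex segment: real Hilbert spaces W0, W1, W2 with closed, densely defined linear operators d0 : V0 → W1 (dense domain V0 ⊆ W0) and d1 : V1 → W2 (dense domain V1 ⊆ W1) such that d0(V0) ⊆ V1, d1(d0 τ) = 0 for all τ ∈ V0, and the ranges B = d0(V0) ⊆ W1 and d1(V1) ⊆ W2 are closed. Let d0† be the adjoint of d0 with domain V1* ⊆ W1, let H = {w ∈ V1 : d1 w = 0 and ⟨w, d0 τ⟩ = 0 for all τ ∈ V0}, and let P_H denote the W1-orthogonal projection onto H. Then there exists a constant C > 0 such that for every u ∈ V1 ∩ V1*, ‖u‖² ≤ C (‖d1 u‖² + ‖d0† u‖² + ‖P_H u‖²); consequently the bilinear form ⟨d0† u, d0† v⟩ +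 ⟨d1 u, d1 v⟩ + ⟨P_H u, P_H v⟩ is an inner product on V1 ∩ V1* whose norm is equivalent to the intersection norm (‖u‖² + ‖d1 u‖² + ‖d0† u‖²)^{1/2}. -/
/-!
Since `d0` and `d1` have closed graphs and closed ranges, the open mapping theorem gives every
value of `d_i` a preimage of norm at most `C_i` times that value. Split `u ∈ V1 ∩ V1*`
orthogonally as `u = P_B u + r + P_H u`. Testing `u` against a small preimage of `P_B u`
gives `‖P_B u‖ ≤ C0 ‖d0† u‖`. The remainder `r` lies in `V1`, has `d1 r = d1 u`, and is
orthogonal to `ker d1 = B ⊕ H`, so comparing it with a small preimage of `d1 u` gives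
`‖r‖ ≤ C1 ‖d1 u‖`. Pythagoras yields the main inequality, and the reverse comparison is
`‖P_H u‖ ≤ ‖u‖`.
-/

open scoped RealInnerProductSpace

def HasBoundedPreimage {E F : Type*} [NormedAddCommGroup E] [NormedAddCommGroup F] [Module ℝ E]
    [Module ℝ F] {V : Submodule ℝ E} (d : V →ₗ[ℝ] F) (C : ℝ) : Prop :=
  ∀ v : V, ∃ w : V, d w = d v ∧ ‖(w : E)‖ ≤ C * ‖d v‖

theorem exists_hasBoundedPreimage_of_isClosed_graph {E F : Type*}
    [NormedAddCommGroup E] [NormedSpace ℝ E] [CompleteSpace E]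
    [NormedAddCommGroup F] [NormedSpace ℝ F] [CompleteSpace F]
    (V : Submodule ℝ E) (d : V →ₗ[ℝ] F)
    (hgraph : IsClosed {p : E × F | ∃ v : V, (v : E) = p.1 ∧ d v = p.2})
    (hrange : IsClosed (Set.range d)) :
    ∃ C : ℝ, 0 < C ∧ HasBoundedPreimage d C := by
  set G := LinearMap.range (V.subtype.prod d)
  have : CompleteSpace G := by
    have hG : IsClosed (G : Set (E × F)) := by
      convert hgraph using 1
      ext ⟨x, y⟩
      simp [G, eq_comm]
    exact hG.completeSpace_coe
  have : CompleteSpace (LinearMap.range d) := by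
    rw [← LinearMap.coe_range] at hrange
    exact hrange.completeSpace_coe
  let π : G →L[ℝ] LinearMap.range d :=
    ((ContinuousLinearMap.snd ℝ E F).comp G.subtypeL).codRestrict _ <| by
      rintro ⟨_, v, rfl⟩
      exact ⟨v, rfl⟩
  have hπ : Function.Surjective π := by
    rintro ⟨_, v, rfl⟩
    exact ⟨⟨_, v, rfl⟩, rfl⟩
  obtain ⟨C, hC0, hC⟩ := π.exists_preimage_norm_le hπ
  refine ⟨C, hC0, fun v => ?_⟩
  obtain ⟨⟨_, w, rfl⟩, hw, hwn⟩ := hC ⟨d v, v, rfl⟩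
  exact ⟨w, congrArg Subtype.val hw, (norm_fst_le _).trans hwn⟩

section BoundedPreimage

variable {E F : Type*} [NormedAddCommGroup E] [InnerProductSpace ℝ E]
  [NormedAddCommGroup F] [InnerProductSpace ℝ F]
  {V : Submodule ℝ E} {d : V →ₗ[ℝ] F} {C : ℝ}

theorem norm_le_of_forall_inner_ker_eq_zero
    (hC : HasBoundedPreimage d C)
    {v : V} (hv : ∀ z : V, d z = 0 → ⟪(v : E), z⟫ = 0) :
    ‖(v : E)‖ ≤ C * ‖d v‖ := by
  obtain ⟨w, hdw, hw⟩ := hC v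
  have hvw : ⟪(v : E), v⟫ = ⟪(v : E), w⟫ := by
    have := hv (v - w) (by rw [map_sub, hdw, sub_self])
    rwa [Submodule.coe_sub, inner_sub_right, sub_eq_zero] at this
  have : ‖(v : E)‖ ^ 2 ≤ ‖(v : E)‖ * (C * ‖d v‖) := calc
    ‖(v : E)‖ ^ 2 = ⟪(v : E), w⟫ := by rw [← hvw, real_inner_self_eq_norm_sq]
    _ ≤ ‖(v : E)‖ * ‖(w : E)‖ := real_inner_le_norm _ _
    _ ≤ ‖(v : E)‖ * (C * ‖d v‖) := by gcongr
  nlinarith [norm_nonneg (v : E), norm_nonneg (w : E)]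

theorem norm_starProjection_range_le [(LinearMap.range d).HasOrthogonalProjection]
    (hC0 : 0 ≤ C) (hC : HasBoundedPreimage d C)
    {u : F} {g : E} (hg : ∀ v : V, ⟪g, v⟫ = ⟪u, d v⟫) :
    ‖(LinearMap.range d).starProjection u‖ ≤ C * ‖g‖ := by
  set p := (LinearMap.range d).starProjection u
  obtain ⟨v, hv⟩ : p ∈ LinearMap.range d := Submodule.starProjection_apply_mem _ u
  obtain ⟨w, hdw, hw⟩ := hC v
  have : ‖p‖ ^ 2 ≤ ‖p‖ * (C * ‖g‖) := calc
    ‖p‖ ^ 2 = ⟪u, p⟫ := by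
      have := Submodule.starProjection_inner_eq_zero u p (Submodule.starProjection_apply_mem _ u)
      rwa [inner_sub_left, sub_eq_zero, real_inner_self_eq_norm_sq, eq_comm] at this
    _ = ⟪g, w⟫ := by rw [hg, hdw, hv]
    _ ≤ ‖g‖ * ‖(w : E)‖ := real_inner_le_norm _ _
    _ ≤ ‖g‖ * (C * ‖p‖) := by rw [hv] at hw; gcongr
    _ = ‖p‖ * (C * ‖g‖) := by ring
  nlinarith [norm_nonneg p, mul_nonneg hC0 (norm_nonneg g)]

end BoundedPreimage

section HilbertComplex

variable {W0 W1 W2 : Type*} [NormedAddCommGroup W0] [InnerProductSpace ℝ W0]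
  [NormedAddCommGroup W1] [InnerProductSpace ℝ W1]
  [NormedAddCommGroup W2] [InnerProductSpace ℝ W2]
  {V0 : Submodule ℝ W0} {V1 : Submodule ℝ W1} {d0 : V0 →ₗ[ℝ] W1} {d1 : V1 →ₗ[ℝ] W2}

variable (d0 d1) in
def IsHarmonic (q : V1) : Prop :=
  d1 q = 0 ∧ ∀ τ : V0, ⟪(q : W1), d0 τ⟫ = 0

variable (hsub : ∀ τ : V0, d0 τ ∈ V1) (hdd : ∀ τ : V0, d1 ⟨d0 τ, hsub τ⟩ = 0)
include hdd

theorem d1_eq_zero_of_mem_range {w : W1} (hw : w ∈ V1) (hwB : w ∈ LinearMap.range d0) :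
    d1 ⟨w, hw⟩ = 0 := by
  obtain ⟨τ, rfl⟩ := hwB
  exact hdd τ

theorem inner_eq_zero_of_ker_of_orthogonal_harmonic [(LinearMap.range d0).HasOrthogonalProjection]
    {r : W1} (hrB : ∀ τ : V0, ⟪r, d0 τ⟫ = 0)
    (hrH : ∀ q : V1, IsHarmonic d0 d1 q → ⟪r, q⟫ = 0)
    {z : V1} (hz : d1 z = 0) : ⟪r, z⟫ = 0 := by
  set zB := (LinearMap.range d0).starProjection z
  obtain ⟨τ, hτ⟩ : zB ∈ LinearMap.range d0 := Submodule.starProjection_apply_mem _ _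
  have hzBV1 : zB ∈ V1 := hτ ▸ hsub τ
  have hq : IsHarmonic d0 d1 (z - ⟨zB, hzBV1⟩) := by
    refine ⟨?_, fun σ => Submodule.starProjection_inner_eq_zero _ _ ⟨σ, rfl⟩⟩
    rw [map_sub, hz, d1_eq_zero_of_mem_range hsub hdd hzBV1 ⟨τ, hτ⟩, sub_self]
  calc ⟪r, z⟫ = ⟪r, d0 τ⟫ + ⟪r, ((z - ⟨zB, hzBV1⟩ : V1) : W1)⟫ := by
        rw [← inner_add_right, Submodule.coe_sub, hτ, add_sub_cancel]
    _ = 0 := by rw [hrB τ, zero_add, hrH _ hq]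

theorem norm_sq_le_adjoint_add_d1_add_harmonic [(LinearMap.range d0).HasOrthogonalProjection]
    {C0 C1 : ℝ} (hC0 : 0 ≤ C0)
    (h0 : HasBoundedPreimage d0 C0) (h1 : HasBoundedPreimage d1 C1)
    {u : V1} {g : W0} (hg : ∀ τ : V0, ⟪g, τ⟫ = ⟪(u : W1), d0 τ⟫)
    {p : V1} (hp : IsHarmonic d0 d1 p)
    (hup : ∀ q : V1, IsHarmonic d0 d1 q → ⟪(u : W1) - p, q⟫ = 0) :
    ‖(u : W1)‖ ^ 2 ≤ C0 ^ 2 * ‖g‖ ^ 2 + C1 ^ 2 * ‖d1 u‖ ^ 2 + ‖(p : W1)‖ ^ 2 := by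
  set uB := (LinearMap.range d0).starProjection u
  obtain ⟨τ, hτ⟩ : uB ∈ LinearMap.range d0 := Submodule.starProjection_apply_mem _ _
  have huBV1 : uB ∈ V1 := hτ ▸ hsub τ
  set r : V1 := u - ⟨uB, huBV1⟩ - p
  have hrB : ∀ σ : V0, ⟪(r : W1), d0 σ⟫ = 0 := fun σ => by
    rw [Submodule.coe_sub, inner_sub_left, hp.2 σ, sub_zero]
    exact Submodule.starProjection_inner_eq_zero _ _ ⟨σ, rfl⟩
  have hrH : ∀ q : V1, IsHarmonic d0 d1 q → ⟪(r : W1), q⟫ = 0 := fun q hq => by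
    have huBq : ⟪uB, (q : W1)⟫ = 0 := by rw [← hτ, real_inner_comm]; exact hq.2 τ
    rw [show (r : W1) = u - p - uB by simp only [r, Submodule.coe_sub]; abel,
      inner_sub_left, hup q hq, huBq, sub_zero]
  have hdr : d1 r = d1 u := by
    rw [map_sub, map_sub, d1_eq_zero_of_mem_range hsub hdd huBV1 ⟨τ, hτ⟩, hp.1, sub_zero,
      sub_zero]
  have huB : ‖uB‖ ≤ C0 * ‖g‖ := norm_starProjection_range_le hC0 h0 hg
  have hr : ‖(r : W1)‖ ≤ C1 * ‖d1 u‖ := hdr ▸ norm_le_of_forall_inner_ker_eq_zero h1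
    fun _ hz => inner_eq_zero_of_ker_of_orthogonal_harmonic hsub hdd hrB hrH hz
  have hpyth : ‖(u : W1)‖ ^ 2 = ‖uB‖ ^ 2 + ‖(r : W1)‖ ^ 2 + ‖(p : W1)‖ ^ 2 := by
    have hrp : ⟪(r : W1), p⟫ = 0 := hrH p hp
    have huBrp : ⟪uB, (r : W1) + p⟫ = 0 := by
      rw [← hτ, inner_add_right, real_inner_comm, hrB τ, real_inner_comm, hp.2 τ, add_zero]
    have hsplit : (u : W1) = uB + ((r : W1) + p) := by simp only [r, Submodule.coe_sub]; abel
    rw [hsplit, norm_add_sq_real, huBrp, norm_add_sq_real, hrp]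
    ring
  calc ‖(u : W1)‖ ^ 2 = ‖uB‖ ^ 2 + ‖(r : W1)‖ ^ 2 + ‖(p : W1)‖ ^ 2 := hpyth
    _ ≤ (C0 * ‖g‖) ^ 2 + (C1 * ‖d1 u‖) ^ 2 + ‖(p : W1)‖ ^ 2 := by gcongr
    _ = C0 ^ 2 * ‖g‖ ^ 2 + C1 ^ 2 * ‖d1 u‖ ^ 2 + ‖(p : W1)‖ ^ 2 := by ring

end HilbertComplex

theorem two_sided_comparison {x a b p A B : ℝ} (ha : 0 ≤ a) (hb : 0 ≤ b) (hp : 0 ≤ p)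
    (hA : 0 ≤ A) (hB : 0 ≤ B) (hx : x ≤ A * b + B * a + p) (hpx : p ≤ x) :
    x ≤ (A + B + 2) * (a + b + p) ∧ (A + B + 2)⁻¹ * (x + a + b) ≤ a + b + p ∧
      a + b + p ≤ (A + B + 2) * (x + a + b) := by
  refine ⟨by nlinarith, ?_, by nlinarith⟩
  rw [inv_mul_le_iff₀ (by positivity)]
  nlinarith

theorem harmonic_augmented_norm_equivalence_general
    {W0 W1 W2 : Type*}
    [NormedAddCommGroup W0] [InnerProductSpace ℝ W0] [CompleteSpace W0]
    [NormedAddCommGroup W1] [InnerProductSpace ℝ W1] [CompleteSpace W1]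
    [NormedAddCommGroup W2] [InnerProductSpace ℝ W2] [CompleteSpace W2]
    (V0 : Submodule ℝ W0) (V1 : Submodule ℝ W1)
    (d0 : V0 →ₗ[ℝ] W1) (d1 : V1 →ₗ[ℝ] W2)
    (hgraph0 : IsClosed {p : W0 × W1 | ∃ τ : V0, (τ : W0) = p.1 ∧ d0 τ = p.2})
    (hgraph1 : IsClosed {p : W1 × W2 | ∃ v : V1, (v : W1) = p.1 ∧ d1 v = p.2})
    (hsub : ∀ τ : V0, d0 τ ∈ V1)
    (hdd : ∀ τ : V0, d1 ⟨d0 τ, hsub τ⟩ = 0)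
    (hBclosed : IsClosed (Set.range (⇑d0)))
    (hd1closed : IsClosed (Set.range (⇑d1)))
    -- the adjoint `d0†`, with its domain `V1* ⊆ W1`
    (V1s : Submodule ℝ W1)
    (δ : V1s →ₗ[ℝ] W0)
    (hδ : ∀ (w : V1s) (τ : V0), ⟪δ w, (τ : W0)⟫ = ⟪(w : W1), d0 τ⟫)
    -- the `W1`-orthogonal projection onto the harmonic space `H`
    (PH : W1 → W1)
    (hPHmem : ∀ w : W1, ∃ hm : PH w ∈ V1,
      d1 ⟨PH w, hm⟩ = 0 ∧ ∀ τ : V0, ⟪PH w, d0 τ⟫ = 0)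
    (hPHorth : ∀ (w : W1) (q : V1), d1 q = 0 → (∀ τ : V0, ⟪(q : W1), d0 τ⟫ = 0) →
      ⟪w - PH w, (q : W1)⟫ = 0) :
    ∃ C : ℝ, 0 < C ∧ ∀ (u : W1) (hu1 : u ∈ V1) (hu2 : u ∈ V1s),
      ‖u‖ ^ 2 ≤ C * (‖d1 ⟨u, hu1⟩‖ ^ 2 + ‖δ ⟨u, hu2⟩‖ ^ 2 + ‖PH u‖ ^ 2) ∧
      C⁻¹ * (‖u‖ ^ 2 + ‖d1 ⟨u, hu1⟩‖ ^ 2 + ‖δ ⟨u, hu2⟩‖ ^ 2) ≤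
        ‖d1 ⟨u, hu1⟩‖ ^ 2 + ‖δ ⟨u, hu2⟩‖ ^ 2 + ‖PH u‖ ^ 2 ∧
      ‖d1 ⟨u, hu1⟩‖ ^ 2 + ‖δ ⟨u, hu2⟩‖ ^ 2 + ‖PH u‖ ^ 2 ≤
        C * (‖u‖ ^ 2 + ‖d1 ⟨u, hu1⟩‖ ^ 2 + ‖δ ⟨u, hu2⟩‖ ^ 2) := by
  have : CompleteSpace (LinearMap.range d0) :=
    (LinearMap.coe_range d0 ▸ hBclosed).completeSpace_coe
  obtain ⟨C0, hC0, h0⟩ := exists_hasBoundedPreimage_of_isClosed_graph V0 d0 hgraph0 hBclosed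
  obtain ⟨C1, -, h1⟩ := exists_hasBoundedPreimage_of_isClosed_graph V1 d1 hgraph1 hd1closed
  refine ⟨C0 ^ 2 + C1 ^ 2 + 2, by positivity, fun u hu1 hu2 => ?_⟩
  obtain ⟨hPm, hPH⟩ := hPHmem u
  have hu := norm_sq_le_adjoint_add_d1_add_harmonic hsub hdd hC0.le h0 h1 (u := ⟨u, hu1⟩)
    (hδ ⟨u, hu2⟩) (p := ⟨PH u, hPm⟩) hPH fun q hq => hPHorth u q hq.1 hq.2
  have hPu : ‖PH u‖ ^ 2 ≤ ‖u‖ ^ 2 := by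
    have := norm_add_sq_eq_norm_sq_add_norm_sq_real (hPHorth u ⟨PH u, hPm⟩ hPH.1 hPH.2)
    rw [sub_add_cancel] at this
    nlinarith [norm_nonneg (u - PH u)]
  exact two_sided_comparison (sq_nonneg _) (sq_nonneg _) (sq_nonneg _) (sq_nonneg _)
    (sq_nonneg _) hu hPu

/-- On a closed Hilbert complex segment, with `d0†` the adjoint of `d0` (domain `V1*`)
and `P_H` the `W1`-orthogonal projection onto the harmonic space, there is `C > 0`
such that `‖u‖² ≤ C (‖d1 u‖² + ‖d0† u‖² + ‖P_H u‖²)` for all `u ∈ V1 ∩ V1*`;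
consequently the bilinear form `⟪d0† u, d0† v⟫ + ⟪d1 u, d1 v⟫ + ⟪P_H u, P_H v⟫`
induces a norm equivalent to the intersection norm `(‖u‖² + ‖d1 u‖² + ‖d0† u‖²)^{1/2}`
(expressed here via the two-sided comparison of the squared norms). -/
theorem harmonic_augmented_norm_equivalence
    {W0 W1 W2 : Type*}
    [NormedAddCommGroup W0] [InnerProductSpace ℝ W0] [CompleteSpace W0]
    [NormedAddCommGroup W1] [InnerProductSpace ℝ W1] [CompleteSpace W1]
    [NormedAddCommGroup W2] [InnerProductSpace ℝ W2] [CompleteSpace W2]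
    (V0 : Submodule ℝ W0) (V1 : Submodule ℝ W1)
    (d0 : V0 →ₗ[ℝ] W1) (d1 : V1 →ₗ[ℝ] W2)
    (hV0dense : Dense (V0 : Set W0)) (hV1dense : Dense (V1 : Set W1))
    (hgraph0 : IsClosed {p : W0 × W1 | ∃ τ : V0, (τ : W0) = p.1 ∧ d0 τ = p.2})
    (hgraph1 : IsClosed {p : W1 × W2 | ∃ v : V1, (v : W1) = p.1 ∧ d1 v = p.2})
    (hsub : ∀ τ : V0, d0 τ ∈ V1)
    (hdd : ∀ τ : V0, d1 ⟨d0 τ, hsub τ⟩ = 0)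
    (hBclosed : IsClosed (Set.range (⇑d0)))
    (hd1closed : IsClosed (Set.range (⇑d1)))
    -- the adjoint `d0†`, with its domain `V1* ⊆ W1`
    (V1s : Submodule ℝ W1)
    (hV1s : ∀ w : W1, w ∈ V1s ↔ ∃ Cw : ℝ, ∀ τ : V0, |⟪w, d0 τ⟫| ≤ Cw * ‖(τ : W0)‖)
    (δ : V1s →ₗ[ℝ] W0)
    (hδ : ∀ (w : V1s) (τ : V0), ⟪δ w, (τ : W0)⟫ = ⟪(w : W1), d0 τ⟫)
    -- the `W1`-orthogonal projection onto the harmonic space `H`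
    (PH : W1 → W1)
    (hPHmem : ∀ w : W1, ∃ hm : PH w ∈ V1,
      d1 ⟨PH w, hm⟩ = 0 ∧ ∀ τ : V0, ⟪PH w, d0 τ⟫ = 0)
    (hPHfix : ∀ (q : V1), d1 q = 0 → (∀ τ : V0, ⟪(q : W1), d0 τ⟫ = 0) →
      PH (q : W1) = (q : W1))
    (hPHorth : ∀ (w : W1) (q : V1), d1 q = 0 → (∀ τ : V0, ⟪(q : W1), d0 τ⟫ = 0) →
      ⟪w - PH w, (q : W1)⟫ = 0) :
    ∃ C : ℝ, 0 < C ∧ ∀ (u : W1) (hu1 : u ∈ V1) (hu2 : u ∈ V1s),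
      ‖u‖ ^ 2 ≤ C * (‖d1 ⟨u, hu1⟩‖ ^ 2 + ‖δ ⟨u, hu2⟩‖ ^ 2 + ‖PH u‖ ^ 2) ∧
      C⁻¹ * (‖u‖ ^ 2 + ‖d1 ⟨u, hu1⟩‖ ^ 2 + ‖δ ⟨u, hu2⟩‖ ^ 2) ≤
        ‖d1 ⟨u, hu1⟩‖ ^ 2 + ‖δ ⟨u, hu2⟩‖ ^ 2 + ‖PH u‖ ^ 2 ∧
      ‖d1 ⟨u, hu1⟩‖ ^ 2 + ‖δ ⟨u, hu2⟩‖ ^ 2 + ‖PH u‖ ^ 2 ≤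
        C * (‖u‖ ^ 2 + ‖d1 ⟨u, hu1⟩‖ ^ 2 + ‖δ ⟨u, hu2⟩‖ ^ 2) :=
  harmonic_augmented_norm_equivalence_general V0 V1 d0 d1 hgraph0 hgraph1 hsub hdd hBclosed
    hd1closed V1s δ hδ PH hPHmem hPHorth
end
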